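/- arXiv:2110.02783 — 2 statements merged into one kernel-verified Lean document; each statement's English description precedes it below -/
import Mathlib

section
/- With A the minimal DFA of Paths(N) for a sound deterministic negotiation N: every execution (not necessarily complete) of N_A is also an execution of N; consequently L(N_A) ⊆ L(N). -/
universe u v w

variable {P : Type u} {A : Type v}

/-- One swap of two adjacent independent letters. -/
def SwapStep (dom : A → Set P) (u v : List A) : Prop :=
  ∃ x y : List A, ∃ a b : A, dom a ∩ dom b = ∅ ∧
    u = x ++ a :: b :: y ∧ v = x ++ b :: a :: y

/-- Mazurkiewicz trace equivalence: reflexive-transitive-symmetric closure of swaps. -/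
def TraceEq (dom : A → Set P) : List A → List A → Prop :=
  Relation.EqvGen (SwapStep dom)

open Classical in
/-- Projection of a word on a process `p`: keep letters whose domain contains `p`. -/
noncomputable def proj (dom : A → Set P) (p : P) : List A → List A
  | [] => []
  | a :: w => if p ∈ dom a then a :: proj dom p w else proj dom p w

/-- A word `t` is co-prime with minimal letter `b` if every trace-equivalent word starts with `b`. -/
def CoPrime (dom : A → Set P) (t : List A) (b : A) : Prop :=
  ∀ v, TraceEq dom t v → ∃ v', v = b :: v'

/-- A `(b,p)`-step: `s = b·s'` is co-prime with minimal letter `b`, `p ∈ dom b`,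
and `b` is the only letter of `s` involving `p`. -/
def IsStep (dom : A → Set P) (s : List A) (b : A) (p : P) : Prop :=
  p ∈ dom b ∧ CoPrime dom s b ∧ ∃ s', s = b :: s' ∧ ∀ a ∈ s', p ∉ dom a

/-- A (deterministic) negotiation diagram. -/
structure Negotiation (P : Type u) (A : Type v) where
  Node : Type w
  dnode : Node → Set P
  ninit : Node
  nfin : Node
  tr : Node → A → P → Option Node

namespace Negotiation

/-- Well-formedness conditions of a negotiation diagram over distributed alphabet `dom`. -/
def WellFormed (N : Negotiation P A) (dom : A → Set P) : Prop :=
  (∀ n, (N.dnode n).Nonempty) ∧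
  N.dnode N.ninit = Set.univ ∧
  N.dnode N.nfin = Set.univ ∧
  (∀ n a p n', N.tr n a p = some n' →
    N.dnode n = dom a ∧ p ∈ dom a ∧ p ∈ N.dnode n' ∧
    ∀ q ∈ dom a, (N.tr n a q).isSome)

/-- Node `n` is enabled in configuration `C`. -/
def Enabled (N : Negotiation P A) (n : N.Node) (C : P → N.Node) : Prop :=
  ∀ p ∈ N.dnode n, C p = n

/-- `n` is the unique node enabled in `C`. -/
def UniqueEnabled (N : Negotiation P A) (n : N.Node) (C : P → N.Node) : Prop :=
  N.Enabled n C ∧ ∀ m, N.Enabled m C → m = n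

/-- A step of a negotiation on action `a` between configurations. -/
def Step (N : Negotiation P A) (dom : A → Set P) (C : P → N.Node) (a : A)
    (C' : P → N.Node) : Prop :=
  ∃ n, N.Enabled n C ∧ (∀ p ∈ dom a, N.tr n a p = some (C' p)) ∧
    ∀ p, p ∉ dom a → C' p = C p

/-- Execution of a word between configurations. -/
def Run (N : Negotiation P A) (dom : A → Set P) :
    (P → N.Node) → List A → (P → N.Node) → Prop
  | C, [], C' => C = C'
  | C, a :: word, C'' => ∃ C', N.Step dom C a C' ∧ N.Run dom C' word C''

/-- The initial configuration: all processes in the initial node. -/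
def Cinit (N : Negotiation P A) : P → N.Node := fun _ => N.ninit

/-- The final configuration: all processes in the final node. -/
def Cfin (N : Negotiation P A) : P → N.Node := fun _ => N.nfin

/-- The language of successful executions of `N`. -/
def Lang (N : Negotiation P A) (dom : A → Set P) (word : List A) : Prop :=
  N.Run dom N.Cinit word N.Cfin

/-- Soundness: every execution from the initial configuration extends to a successful one. -/
def Sound (N : Negotiation P A) (dom : A → Set P) : Prop :=
  ∀ word C, N.Run dom N.Cinit word C → ∃ v, N.Run dom C v N.Cfin

/-- A local path of process `p` in the graph of `N`. -/
def PPath (N : Negotiation P A) (p : P) : N.Node → List A → N.Node → Prop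
  | n, [], n' => n = n'
  | n, a :: word, n'' => ∃ n', N.tr n a p = some n' ∧ N.PPath p n' word n''

/-- A local path in the graph of `N`, labelled over the alphabet `A_dom` of pairs `(a,p)`. -/
def GPath (N : Negotiation P A) : N.Node → List (A × P) → N.Node → Prop
  | n, [], n' => n = n'
  | n, x :: word, n'' => ∃ n', N.tr n x.1 x.2 = some n' ∧ N.GPath n' word n''

/-- `Paths(N)`: labels of local paths from the initial to the final node. -/
def PathsL (N : Negotiation P A) : Set (List (A × P)) :=
  { w | N.GPath N.ninit w N.nfin }

end Negotiation

/-- A DFA with a partial transition function and a single final state. -/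
structure PDFA (B : Type v) where
  S : Type w
  init : S
  trd : S → B → Option S
  fin : S

/-- Run of a partial DFA on a word. -/
def DRun (D : PDFA B) : D.S → List B → D.S → Prop
  | s, [], s' => s = s'
  | s, x :: word, s'' => ∃ s', D.trd s x = some s' ∧ DRun D s' word s''

/-- Acceptance from a state. -/
def AccFrom (D : PDFA B) (s : D.S) (word : List B) : Prop := DRun D s word D.fin

/-- Acceptance of the DFA. -/
def Accepts (D : PDFA B) (word : List B) : Prop := AccFrom D D.init word

/-- Trimmed: every state reachable and co-reachable. -/
def Trimmed (D : PDFA B) : Prop :=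
  ∀ s, (∃ word, DRun D D.init word s) ∧ (∃ word, DRun D s word D.fin)

/-- `D` is (a copy of) the minimal DFA of `L`: it accepts `L`, is trimmed,
and states with equal residual languages are equal (Myhill–Nerode). -/
def DFAMinimalFor (D : PDFA B) (L : Set (List B)) : Prop :=
  (∀ word, Accepts D word ↔ word ∈ L) ∧ Trimmed D ∧
  ∀ s s', (∀ word, AccFrom D s word ↔ AccFrom D s' word) → s = s'

open Classical in
/-- The negotiation `N_A` associated with a dom-complete DFA over the alphabet `A × P`:
states become nodes, `dnode s = dom a` when some `(a,p)` is outgoing from `s`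
(and `Proc` otherwise, in particular at the final state), and transitions are inherited. -/
noncomputable def negOfDFA (dom : A → Set P) (D : PDFA (A × P)) : Negotiation P A where
  Node := D.S
  dnode := fun s =>
    if h : ∃ x : A × P, (D.trd s x).isSome then dom h.choose.1 else Set.univ
  ninit := D.init
  nfin := D.fin
  tr := fun s a p => D.trd s (a, p)

/-! Simulate `N_A` inside `N`, linking each DFA state `s` with the nodes of `N` whose residual
path language is that of `s`. A step of `N_A` at state `s` on `a` moves all processes of `dom a`,
which in the simulating configuration of `N` sit at nodes linked with `s`. Two such nodes have
the same outgoing actions, hence the same domain, and if they were distinct the processes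
at them would wait for each other forever, contradicting soundness. So they form a single
node of `N`, which then performs `a`, and the targets of the two transitions are linked again. -/

namespace Negotiation

variable {N : Negotiation P A} {dom : A → Set P}

theorem Run.append {C C₂ C₃ : P → N.Node} {u v : List A}
    (h₁ : N.Run dom C u C₂) (h₂ : N.Run dom C₂ v C₃) : N.Run dom C (u ++ v) C₃ := by
  induction u generalizing C with
  | nil => cases h₁; exact h₂
  | cons a u ih =>
    obtain ⟨C₁, hstep, hrun⟩ := h₁
    exact ⟨C₁, hstep, ih hrun⟩

theorem Step.of_mem_dom (hWF : N.WellFormed dom) {C C' : P → N.Node} {a : A} {p : P}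
    (h : N.Step dom C a C') (hp : p ∈ dom a) :
    N.dnode (C p) = dom a ∧ N.tr (C p) a p = some (C' p) ∧ ∀ q ∈ dom a, C q = C p := by
  obtain ⟨n, hen, htr, -⟩ := h
  have hdn : N.dnode n = dom a := (hWF.2.2.2 n a p _ (htr p hp)).1
  have hC : ∀ q ∈ dom a, C q = n := fun q hq => hen q (hdn ▸ hq)
  rw [hC p hp]
  exact ⟨hdn, htr p hp, hC⟩

theorem Step.apply_of_notMem {C C' : P → N.Node} {a : A} {p : P} (h : N.Step dom C a C')
    (hp : p ∉ dom a) : C' p = C p :=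
  let ⟨_, _, _, hout⟩ := h
  hout p hp

theorem Run.exists_gPath (hWF : N.WellFormed dom) {C C' : P → N.Node} {v : List A}
    (h : N.Run dom C v C') (p : P) : ∃ u, N.GPath (C p) u (C' p) := by
  induction v generalizing C with
  | nil => cases h; exact ⟨[], rfl⟩
  | cons a v ih =>
    obtain ⟨C₁, hstep, hrun⟩ := h
    obtain ⟨u, hu⟩ := ih hrun
    by_cases hp : p ∈ dom a
    · exact ⟨(a, p) :: u, C₁ p, (hstep.of_mem_dom hWF hp).2.1, hu⟩
    · exact ⟨u, hstep.apply_of_notMem hp ▸ hu⟩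

theorem Run.mem_dnode (hWF : N.WellFormed dom) {C C' : P → N.Node} {v : List A}
    (h : N.Run dom C v C') (hC : ∀ p, p ∈ N.dnode (C p)) (p : P) : p ∈ N.dnode (C' p) := by
  induction v generalizing C with
  | nil => cases h; exact hC p
  | cons a v ih =>
    obtain ⟨C₁, hstep, hrun⟩ := h
    refine ih hrun fun q => ?_
    by_cases hq : q ∈ dom a
    · exact (hWF.2.2.2 _ a q _ (hstep.of_mem_dom hWF hq).2.1).2.2.1
    · exact hstep.apply_of_notMem hq ▸ hC q

theorem mem_dnode_of_run_cinit (hWF : N.WellFormed dom) {C : P → N.Node} {u : List A}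
    (h : N.Run dom N.Cinit u C) (p : P) : p ∈ N.dnode (C p) :=
  h.mem_dnode hWF (fun q => by simp [Cinit, hWF.2.1]) p

theorem not_run_cfin_of_deadlock (hWF : N.WellFormed dom) {C : P → N.Node} {p q : P}
    (hne : C p ≠ C q) (hqp : q ∈ N.dnode (C p)) (hpq : p ∈ N.dnode (C q)) (v : List A) :
    ¬ N.Run dom C v N.Cfin := by
  induction v generalizing C with
  | nil => rintro rfl; exact hne rfl
  | cons a v ih =>
    rintro ⟨C₁, hstep, hrun⟩
    by_cases hp : p ∈ dom a
    · obtain ⟨hdn, -, hC⟩ := hstep.of_mem_dom hWF hp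
      exact hne (hC q (hdn ▸ hqp)).symm
    by_cases hq : q ∈ dom a
    · obtain ⟨hdn, -, -⟩ := hstep.of_mem_dom hWF hq
      exact hp (hdn ▸ hpq)
    have hp₁ := hstep.apply_of_notMem hp
    have hq₁ := hstep.apply_of_notMem hq
    exact ih (by rwa [hp₁, hq₁]) (by rwa [hp₁]) (by rwa [hq₁]) hrun

theorem exists_step_of_tr (hWF : N.WellFormed dom) {C : P → N.Node} {n m : N.Node} {a : A}
    {p : P} (htr : N.tr n a p = some m) (hC : ∀ q ∈ dom a, C q = n) :
    ∃ C', N.Step dom C a C' ∧ ∀ q ∈ dom a, N.tr n a q = some (C' q) := by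
  obtain ⟨hdn, -, -, hsome⟩ := hWF.2.2.2 n a p m htr
  set C' : P → N.Node := fun q => (N.tr n a q).getD (C q)
  have hin : ∀ q ∈ dom a, N.tr n a q = some (C' q) := fun q hq => by
    obtain ⟨_, h⟩ := Option.isSome_iff_exists.mp (hsome q hq)
    simp [C', h]
  have hout : ∀ q ∉ dom a, C' q = C q := fun q hq => by
    cases h : N.tr n a q with
    | none => simp [C', h]
    | some m' => exact absurd (hWF.2.2.2 n a q m' h).2.1 hq
  exact ⟨C', ⟨n, fun q hq => hC q (hdn ▸ hq), hin, hout⟩, hin⟩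

end Negotiation

def Linked (N : Negotiation P A) (D : PDFA (A × P)) (s : D.S) (n : N.Node) : Prop :=
  ∀ v, AccFrom D s v ↔ N.GPath n v N.nfin

namespace Linked

variable {N : Negotiation P A} {dom : A → Set P} {D : PDFA (A × P)} {s t : D.S}
  {n m : N.Node} {x : A × P}

theorem init (hmin : DFAMinimalFor D N.PathsL) : Linked N D D.init N.ninit :=
  hmin.1

theorem step (h : Linked N D s n) (ht : D.trd s x = some t) (hm : N.tr n x.1 x.2 = some m) :
    Linked N D t m := by
  intro v
  have hD : AccFrom D s (x :: v) ↔ AccFrom D t v := by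
    simp [AccFrom, DRun, ht]
  have hN : N.GPath n (x :: v) N.nfin ↔ N.GPath m v N.nfin := by
    simp [Negotiation.GPath, hm]
  rw [← hD, h, hN]

theorem exists_tr (htrim : Trimmed D) (h : Linked N D s n) (ht : D.trd s x = some t) :
    ∃ m, N.tr n x.1 x.2 = some m := by
  obtain ⟨v, hv⟩ := (htrim t).2
  obtain ⟨m, hm, -⟩ := (h (x :: v)).1 ⟨t, ht, hv⟩
  exact ⟨m, hm⟩

theorem dnode_eq (hWF : N.WellFormed dom) (htrim : Trimmed D) (h : Linked N D s n)
    (ht : D.trd s x = some t) : N.dnode n = dom x.1 :=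
  let ⟨_, hm⟩ := h.exists_tr htrim ht
  (hWF.2.2.2 n x.1 x.2 _ hm).1

/-- Otherwise both nodes have the domain of the first letter of a path from `s` to the final
state, and the two processes would block each other. -/
theorem node_eq (hWF : N.WellFormed dom) (hS : N.Sound dom) {u : List A}
    {C : P → N.Node} (hu : N.Run dom N.Cinit u C) {p q : P}
    (hp : Linked N D s (C p)) (hq : Linked N D s (C q)) : C p = C q := by
  by_contra hne
  obtain ⟨v, hv⟩ := hS u C hu
  obtain ⟨w, hw⟩ := hv.exists_gPath hWF p
  have hmem := Negotiation.mem_dnode_of_run_cinit hWF hu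
  cases w with
  | nil => exact hne ((hw : C p = N.nfin).trans ((hq []).1 ((hp []).2 hw)).symm)
  | cons x w =>
    obtain ⟨_, hxq, -⟩ := (hq _).1 ((hp _).2 hw)
    obtain ⟨_, hxp, -⟩ := hw
    have hdp := (hWF.2.2.2 _ x.1 x.2 _ hxp).1
    have hdq := (hWF.2.2.2 _ x.1 x.2 _ hxq).1
    exact Negotiation.not_run_cfin_of_deadlock hWF hne (hdp ▸ hdq ▸ hmem q)
      (hdq ▸ hdp ▸ hmem p) v hv

end Linked

section Simulation

variable {N : Negotiation P A} {dom : A → Set P} {D : PDFA (A × P)}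

theorem negOfDFA_dnode_nonempty (hdom : ∀ a, (dom a).Nonempty) (a : A) (s : D.S) :
    ((negOfDFA dom D).dnode s).Nonempty := by
  simp only [negOfDFA]
  split
  · exact hdom _
  · exact ⟨(hdom a).some, trivial⟩

theorem negOfDFA_dnode_eq (hWF : N.WellFormed dom) (htrim : Trimmed D) {s t : D.S}
    {n : N.Node} {x : A × P} (hl : Linked N D s n) (ht : D.trd s x = some t) :
    (negOfDFA dom D).dnode s = dom x.1 := by
  have hsome : ∃ y : A × P, (D.trd s y).isSome := ⟨x, by simp [ht]⟩
  obtain ⟨t', ht'⟩ := Option.isSome_iff_exists.mp hsome.choose_spec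
  calc (negOfDFA dom D).dnode s = dom hsome.choose.1 := dif_pos hsome
    _ = N.dnode n := (hl.dnode_eq hWF htrim ht').symm
    _ = dom x.1 := hl.dnode_eq hWF htrim ht

theorem exists_step_of_negOfDFA_step (hdom : ∀ a, (dom a).Nonempty) (hWF : N.WellFormed dom)
    (hS : N.Sound dom) (htrim : Trimmed D) {u : List A} {C₀' : P → N.Node}
    (hu : N.Run dom N.Cinit u C₀') {C₀ C₁ : P → (negOfDFA dom D).Node} {a : A}
    (hlink : ∀ p, Linked N D (C₀ p) (C₀' p)) (hstep : (negOfDFA dom D).Step dom C₀ a C₁) :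
    ∃ C₁', N.Step dom C₀' a C₁' ∧ ∀ p, Linked N D (C₁ p) (C₁' p) := by
  obtain ⟨s, hen, htr, hout⟩ := hstep
  obtain ⟨q₀, hq₀⟩ := negOfDFA_dnode_nonempty (D := D) hdom a s
  have hl : Linked N D s (C₀' q₀) := hen q₀ hq₀ ▸ hlink q₀
  obtain ⟨p₀, hp₀⟩ := hdom a
  have hdn : (negOfDFA dom D).dnode s = dom a := negOfDFA_dnode_eq hWF htrim hl (htr p₀ hp₀)
  have hC : ∀ q ∈ dom a, C₀' q = C₀' q₀ := fun q hq =>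
    Linked.node_eq hWF hS hu (hen q (hdn ▸ hq) ▸ hlink q) hl
  obtain ⟨m, hm⟩ := hl.exists_tr htrim (htr p₀ hp₀)
  obtain ⟨C₁', hstep', htr'⟩ := Negotiation.exists_step_of_tr hWF hm hC
  refine ⟨C₁', hstep', fun p => ?_⟩
  by_cases hp : p ∈ dom a
  · exact hl.step (htr p hp) (htr' p hp)
  · rw [hout p hp, hstep'.apply_of_notMem hp]
    exact hlink p

theorem exists_run_of_negOfDFA_run (hdom : ∀ a, (dom a).Nonempty) (hWF : N.WellFormed dom)
    (hS : N.Sound dom) (htrim : Trimmed D) {w : List A} {C₀ C : P → (negOfDFA dom D).Node}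
    (h : (negOfDFA dom D).Run dom C₀ w C) {u : List A} {C₀' : P → N.Node}
    (hu : N.Run dom N.Cinit u C₀') (hlink : ∀ p, Linked N D (C₀ p) (C₀' p)) :
    ∃ C', N.Run dom C₀' w C' ∧ ∀ p, Linked N D (C p) (C' p) := by
  induction w generalizing C₀ C₀' u with
  | nil => cases h; exact ⟨C₀', rfl, hlink⟩
  | cons a w ih =>
    obtain ⟨C₁, hstep, hrun⟩ := h
    obtain ⟨C₁', hstep', hlink₁⟩ :=
      exists_step_of_negOfDFA_step hdom hWF hS htrim hu hlink hstep
    obtain ⟨C', hrun', hlink'⟩ := ih hrun (hu.append (v := [a]) ⟨C₁', hstep', rfl⟩) hlink₁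
    exact ⟨C', ⟨C₁', hstep', hrun'⟩, hlink'⟩

end Simulation

theorem negOfDFA_executions_subset_general (dom : A → Set P)
    (hdom : ∀ a, (dom a).Nonempty) (N : Negotiation P A)
    (hWF : N.WellFormed dom)
    (hS : N.Sound dom)
    (D : PDFA (A × P)) (hmin : DFAMinimalFor D N.PathsL) :
    (∀ (w : List A) (C : P → (negOfDFA dom D).Node),
      (negOfDFA dom D).Run dom (negOfDFA dom D).Cinit w C →
        ∃ C', N.Run dom N.Cinit w C') ∧
    (∀ w, (negOfDFA dom D).Lang dom w → N.Lang dom w) := by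
  have hsim := fun {w} {C} (h : (negOfDFA dom D).Run dom (negOfDFA dom D).Cinit w C) =>
    exists_run_of_negOfDFA_run hdom hWF hS hmin.2.1 h (u := []) rfl
      fun _ => Linked.init hmin
  refine ⟨fun w C h => ?_, fun w h => ?_⟩
  · obtain ⟨C', hrun, -⟩ := hsim h
    exact ⟨C', hrun⟩
  · obtain ⟨C', hrun, hlink⟩ := hsim h
    have hfin : C' = N.Cfin := funext fun p => (hlink p []).1 rfl
    exact (hfin ▸ hrun : N.Run dom N.Cinit w N.Cfin)

/-- Every execution (not necessarily complete) of `N_A` is an execution of `N`;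
consequently `L(N_A) ⊆ L(N)`. -/
theorem negOfDFA_executions_subset [Finite P] [Finite A] (dom : A → Set P)
    (hdom : ∀ a, (dom a).Nonempty) (N : Negotiation P A) [Finite N.Node]
    (hWF : N.WellFormed dom)
    (hfin : ∀ a p, N.tr N.nfin a p = none)
    (hS : N.Sound dom)
    (D : PDFA (A × P)) (hmin : DFAMinimalFor D N.PathsL) :
    (∀ (w : List A) (C : P → (negOfDFA dom D).Node),
      (negOfDFA dom D).Run dom (negOfDFA dom D).Cinit w C →
        ∃ C', N.Run dom N.Cinit w C') ∧
    (∀ w, (negOfDFA dom D).Lang dom w → N.Lang dom w) :=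
  negOfDFA_executions_subset_general dom hdom N hWF hS D hmin
end

section
/- A chain of steps along a local path is co-prime: let s_1, …, s_k be words where each s_i is an (a_i, p_i)-step, and for each i < k the actions a_i and a_{i+1} share a process (p_{i+1} ∈ dom(a_i) ∩ dom(a_{i+1})). Then the concatenation s_1 s_2 ⋯ s_k is co-prime with minimal letter a_1. -/
universe u v w

variable {P : Type u} {A : Type v}

/-!
If `v` is trace-equivalent to `t = s₀ s₁ ⋯ s_{k-1}` and `v` starts with `c`, then `c` heads
the projection of `t` on every process of `c`. Scanning `s₀`: either some letter of `s₀`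
shares a process with `c`, and then `c` can be bubbled to the front of `s₀`, so `c = a₀` since
`s₀` is co-prime; or `s₀` is independent of `c`, and by induction `c = a₁`, which is impossible
because `a₀ ∈ s₀` shares the process `p₁` with `a₁`.
-/

theorem List.flatten_map_range_succ {α : Type*} (s : ℕ → List α) (k : ℕ) :
    ((List.range (k + 1)).map s).flatten
      = s 0 ++ ((List.range k).map fun i => s (i + 1)).flatten := by
  simp [List.range_succ_eq_map, List.map_map, Function.comp_def]

section

variable {dom : A → Set P}

open Classical in
theorem proj_eq_filter (q : P) (w : List A) :
    proj dom q w = w.filter fun a => q ∈ dom a := by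
  induction w with
  | nil => rfl
  | cons b w ih => by_cases h : q ∈ dom b <;> simp [proj, h, ih]

theorem proj_append (q : P) (u w : List A) :
    proj dom q (u ++ w) = proj dom q u ++ proj dom q w := by
  simp only [proj_eq_filter, List.filter_append]

theorem proj_cons_of_mem {q : P} {b : A} (w : List A) (h : q ∈ dom b) :
    proj dom q (b :: w) = b :: proj dom q w := by
  simp [proj, h]

theorem proj_cons_of_notMem {q : P} {b : A} (w : List A) (h : q ∉ dom b) :
    proj dom q (b :: w) = proj dom q w := by
  simp [proj, h]

theorem proj_eq_nil_iff {q : P} {w : List A} : proj dom q w = [] ↔ ∀ e ∈ w, q ∉ dom e := by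
  simp [proj_eq_filter, List.filter_eq_nil_iff]

theorem SwapStep.proj_eq {u v : List A} (h : SwapStep dom u v) (q : P) :
    proj dom q u = proj dom q v := by
  obtain ⟨x, y, b, c, hbc, rfl, rfl⟩ := h
  rw [proj_append, proj_append]
  by_cases hb : q ∈ dom b
  · have hc : q ∉ dom c := fun hc => (hbc ▸ ⟨hb, hc⟩ : q ∈ (∅ : Set P))
    rw [proj_cons_of_mem _ hb, proj_cons_of_notMem _ hc, proj_cons_of_notMem _ hc,
      proj_cons_of_mem _ hb]
  · by_cases hc : q ∈ dom c <;> simp [proj, hb, hc]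

theorem TraceEq.proj_eq {u v : List A} (h : TraceEq dom u v) (q : P) :
    proj dom q u = proj dom q v := by
  induction h with
  | rel _ _ h => exact h.proj_eq q
  | refl => rfl
  | symm _ _ _ ih => exact ih.symm
  | trans _ _ _ _ _ ih₁ ih₂ => exact ih₁.trans ih₂

theorem TraceEq.cons {u v : List A} (h : TraceEq dom u v) (e : A) :
    TraceEq dom (e :: u) (e :: v) := by
  induction h with
  | rel u v h =>
    obtain ⟨x, y, b, c, hbc, rfl, rfl⟩ := h
    exact .rel _ _ ⟨e :: x, y, b, c, hbc, rfl, rfl⟩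
  | refl => exact .refl _
  | symm _ _ _ ih => exact .symm _ _ ih
  | trans _ _ _ _ _ ih₁ ih₂ => exact .trans _ _ _ ih₁ ih₂

theorem traceEq_cons_cons_of_disjoint {b c : A} (h : Disjoint (dom b) (dom c)) (w : List A) :
    TraceEq dom (b :: c :: w) (c :: b :: w) :=
  .rel _ _ ⟨[], w, b, c, Set.disjoint_iff_inter_eq_empty.mp h, rfl, rfl⟩

theorem CoPrime.exists_eq_cons {t : List A} {b : A} (h : CoPrime dom t b) : ∃ t', t = b :: t' :=
  h t (.refl t)

theorem CoPrime.eq_of_traceEq_cons {t w : List A} {b c : A} (h : CoPrime dom t b)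
    (ht : TraceEq dom t (c :: w)) : c = b := by
  obtain ⟨w', hw⟩ := h _ ht
  exact (List.cons_eq_cons.mp hw).1

theorem traceEq_cons_or_forall_disjoint {x y : List A} {c : A}
    (hc : ∀ q ∈ dom c, (proj dom q (x ++ y)).head? = some c) :
    (∃ x', TraceEq dom x (c :: x')) ∨ ∀ e ∈ x, Disjoint (dom e) (dom c) := by
  induction x with
  | nil => simp
  | cons e x ih =>
    by_cases he : Disjoint (dom e) (dom c)
    · have hc' : ∀ q ∈ dom c, (proj dom q (x ++ y)).head? = some c := fun q hq => by
        rw [← hc q hq, List.cons_append, proj_cons_of_notMem _ (Set.disjoint_right.mp he hq)]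
      rcases ih hc' with ⟨x', hx'⟩ | hx
      · exact .inl ⟨e :: x', .trans _ _ _ (hx'.cons e) (traceEq_cons_cons_of_disjoint he x')⟩
      · exact .inr (List.forall_mem_cons.mpr ⟨he, hx⟩)
    · obtain ⟨q, hqe, hqc⟩ := Set.not_disjoint_iff.mp he
      have hhead := hc q hqc
      rw [List.cons_append, proj_cons_of_mem _ hqe, List.head?_cons, Option.some_inj] at hhead
      exact .inl ⟨x, hhead ▸ .refl _⟩

theorem eq_of_head_proj_flatten {k : ℕ} (hk : 0 < k) {s : ℕ → List A}
    {a : ℕ → A} (hcop : ∀ i < k, CoPrime dom (s i) (a i))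
    (hlink : ∀ i, i + 1 < k → ¬Disjoint (dom (a i)) (dom (a (i + 1))))
    {c : A} (hne : (dom c).Nonempty)
    (hc : ∀ q ∈ dom c, (proj dom q ((List.range k).map s).flatten).head? = some c) :
    c = a 0 := by
  induction k generalizing s a with
  | zero => exact absurd hk (lt_irrefl 0)
  | succ k ih =>
    simp only [List.flatten_map_range_succ] at hc
    rcases traceEq_cons_or_forall_disjoint hc with ⟨x', hx'⟩ | hdisj
    · exact (hcop 0 k.succ_pos).eq_of_traceEq_cons hx'
    have hc' : ∀ q ∈ dom c,
        (proj dom q ((List.range k).map fun i => s (i + 1)).flatten).head? = some c := by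
      intro q hq
      rw [← hc q hq, proj_append,
        proj_eq_nil_iff.mpr fun e he => Set.disjoint_right.mp (hdisj e he) hq, List.nil_append]
    obtain rfl | hk' := k.eq_zero_or_pos
    · obtain ⟨q, hq⟩ := hne
      simpa [proj] using hc' q hq
    have hc₁ : c = a 1 := ih hk' (fun i hi => hcop (i + 1) (by omega))
      (fun i hi => hlink (i + 1) (by omega)) hc'
    obtain ⟨s₀, hs₀⟩ := (hcop 0 k.succ_pos).exists_eq_cons
    exact (hlink 0 (by omega) (hc₁ ▸ hdisj (a 0) (hs₀ ▸ List.mem_cons_self))).elim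

end

theorem chain_of_steps_coprime_general (dom : A → Set P)
    (hdom : ∀ a, (dom a).Nonempty) (k : ℕ) (hk : 0 < k)
    (s : ℕ → List A) (a : ℕ → A) (p : ℕ → P)
    (hstep : ∀ i < k, IsStep dom (s i) (a i) (p i))
    (hshare : ∀ i, i + 1 < k →
      p (i + 1) ∈ dom (a i) ∧ p (i + 1) ∈ dom (a (i + 1))) :
    CoPrime dom (((List.range k).map s).flatten) (a 0) := by
  intro v hv
  have ha₀ : a 0 ∈ ((List.range k).map s).flatten := by
    obtain ⟨s₀, hs₀⟩ := (hstep 0 hk).2.1.exists_eq_cons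
    exact List.mem_flatten.mpr ⟨s 0, List.mem_map.mpr ⟨0, List.mem_range.mpr hk, rfl⟩,
      hs₀ ▸ List.mem_cons_self⟩
  rcases v with _ | ⟨c, v⟩
  · exact (proj_eq_nil_iff.mp (hv.proj_eq (p 0)) _ ha₀ (hstep 0 hk).1).elim
  refine ⟨v, congrArg (· :: v) ?_⟩
  refine eq_of_head_proj_flatten hk (fun i hi => (hstep i hi).2.1)
    (fun i hi => Set.not_disjoint_iff.mpr ⟨p (i + 1), hshare i hi⟩) (hdom c) fun q hq => ?_
  rw [hv.proj_eq q, proj_cons_of_mem _ hq, List.head?_cons]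

/-- A chain of steps along a local path is co-prime: concatenating
`(a_i,p_i)`-steps where consecutive actions share the process `p_{i+1}`
yields a co-prime word with minimal letter `a_0`. -/
theorem chain_of_steps_coprime [Finite P] [Finite A] (dom : A → Set P)
    (hdom : ∀ a, (dom a).Nonempty) (k : ℕ) (hk : 0 < k)
    (s : ℕ → List A) (a : ℕ → A) (p : ℕ → P)
    (hstep : ∀ i < k, IsStep dom (s i) (a i) (p i))
    (hshare : ∀ i, i + 1 < k →
      p (i + 1) ∈ dom (a i) ∧ p (i + 1) ∈ dom (a (i + 1))) :
    CoPrime dom (((List.range k).map s).flatten) (a 0) :=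
  chain_of_steps_coprime_general dom hdom k hk s a p hstep hshare
end
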